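/- Let α ∈ (1/3, 1), let x : [0,3] → ℝ be α-Hölder, let h : ℝ → ℝ be of class C², and let H : ℝ → ℝ be an antiderivative of h (H′ = h). Then for all 0 ≤ r ≤ s ≤ 2 the Russo–Vallois symmetric integral ∫_r^s h(x(u)) d°x(u) exists and equals H(x(s)) − H(x(r)). -/

import Mathlib

open MeasureTheory Filter Set

/-- `z` is `α`-Hölder on the interval `[a, b]`. -/
def HolderOnIcc (α a b : ℝ) (z : ℝ → ℝ) : Prop :=
  ∃ L > 0, ∀ s ∈ Set.Icc a b, ∀ t ∈ Set.Icc a b, |z t - z s| ≤ L * |t - s| ^ α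

/-- `I` is the Russo–Vallois symmetric integral `∫_a^b z(s) d°x(s)` (for `a > b` the
interval integral is by convention the negative of the one from `b` to `a`). -/
def RVTendsto (z x : ℝ → ℝ) (a b I : ℝ) : Prop :=
  Filter.Tendsto
    (fun ε : ℝ => ε⁻¹ * ∫ s in a..b, ((z (s + ε) + z s) / 2) * (x (s + ε) - x s))
    (nhdsWithin 0 (Set.Ioi 0)) (nhds I)

/-- `A` is an `α`-Lévy area of order 0 associated with `γ = (x, y)` on `[0, 2]`. -/
def IsLevyArea0 (α : ℝ) (x y : ℝ → ℝ) (A : ℝ → ℝ → ℝ) : Prop :=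
  (∀ r ∈ Set.Icc (0:ℝ) 2, ∀ s ∈ Set.Icc (0:ℝ) 2, ∀ t ∈ Set.Icc (0:ℝ) 2,
    A r s + A s t + A t r
      = -(1/2) * ((y t - y s) * (x r - x s) - (y r - y s) * (x t - x s)))
  ∧ ∃ C > 0, ∀ s ∈ Set.Icc (0:ℝ) 2, ∀ t ∈ Set.Icc (0:ℝ) 2,
      |A s t| ≤ C * |t - s| ^ (2 * α)

/-- The `ε`-approximation `I_ε^{[a,b]}(f)` of the corrected symmetric integral. -/
noncomputable def Ieps (x y : ℝ → ℝ) (A : ℝ → ℝ → ℝ) (f : ℝ → ℝ) (a b ε : ℝ) : ℝ :=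
  ε⁻¹ * (∫ u in a..b, ((f (y u) + f (y (u + ε))) / 2) * (x (u + ε) - x u))
    + ε⁻¹ * (∫ u in a..b, deriv f (y u) * A u (u + ε))

/-! Since `H' = h`, the one-step trapezoid rule gives
`H (x (u + ε)) - H (x u) = (h (x u) + h (x (u + ε))) / 2 * (x (u + ε) - x u) + O(ε ^ (3 * α))`
uniformly in `u`, and `3 * α > 1`, so after dividing by `ε` the error vanishes. What remains,
`ε⁻¹ * ∫ u in r..s, (F (u + ε) - F u)` with `F = H ∘ x`, is the difference of the averages of
`F` over `[s, s + ε]` and `[r, r + ε]`, which tends to `F s - F r` by continuity of `F`. -/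

open scoped Interval Topology

theorem HolderOnIcc.continuousOn {α a b : ℝ} {z : ℝ → ℝ} (hα : 0 < α)
    (hz : HolderOnIcc α a b z) : ContinuousOn z (Icc a b) := by
  obtain ⟨L, -, hL⟩ := hz
  intro s hs
  have hbound : Tendsto (fun t => L * |t - s| ^ α) (𝓝[Icc a b] s) (𝓝 0) := by
    have hcont : Continuous fun t : ℝ => L * |t - s| ^ α :=
      continuous_const.mul ((continuous_id.sub continuous_const).abs.rpow_const
        fun _ => Or.inr hα.le)
    simpa [ContinuousWithinAt, Real.zero_rpow hα.ne'] using
      hcont.continuousWithinAt (s := Icc a b) (x := s)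
  rw [ContinuousWithinAt, tendsto_iff_norm_sub_tendsto_zero]
  refine squeeze_zero' (Eventually.of_forall fun _ => norm_nonneg _) ?_ hbound
  filter_upwards [self_mem_nhdsWithin] with t ht
  exact hL s hs t ht

theorem abs_trapezoid_sub_le {h H : ℝ → ℝ} (hh : ContDiff ℝ 2 h)
    (hH : ∀ z, HasDerivAt H (h z) z) {a b M : ℝ}
    (hM : ∀ z ∈ [[a, b]], |iteratedDeriv 2 h z| ≤ M) :
    |(h a + h b) / 2 * (b - a) - (H b - H a)| ≤ M / 12 * |b - a| ^ 3 := by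
  rcases eq_or_ne a b with rfl | hab
  · simp
  have hM0 : 0 ≤ M := (abs_nonneg _).trans (hM a left_mem_uIcc)
  -- `trapezoidal_error_le_of_c2` asks for the bound everywhere; off `[[a, b]]` the derivative
  -- within `[[a, b]]` is the junk value `0`.
  have hbound : ∀ z, |iteratedDerivWithin 2 h [[a, b]] z| ≤ M := by
    intro z
    by_cases hz : z ∈ [[a, b]]
    · rw [iteratedDerivWithin_eq_iteratedDeriv (uniqueDiffOn_uIcc hab) hh.contDiffAt hz]
      exact hM z hz
    · rwa [iteratedDerivWithin_succ, derivWithin_zero_of_notMem_closure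
        (by rwa [uIcc, closure_Icc]), abs_zero]
  have := trapezoidal_error_le_of_c2 hh.contDiffOn hbound one_pos
  rw [trapezoidal_error, trapezoidal_integral_one, intervalIntegral.integral_eq_sub_of_hasDerivAt
    (fun z _ => hH z) (hh.continuous.intervalIntegrable a b)] at this
  calc |(h a + h b) / 2 * (b - a) - (H b - H a)|
      = |(b - a) / 2 * (h a + h b) - (H b - H a)| := by ring_nf
    _ ≤ |b - a| ^ 3 * M / (12 * (1 : ℕ) ^ 2) := this
    _ = M / 12 * |b - a| ^ 3 := by push_cast; ring

theorem abs_trapezoid_comp_sub_le {h H x : ℝ → ℝ} (hh : ContDiff ℝ 2 h)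
    (hH : ∀ z, HasDerivAt H (h z) z) {I : Set ℝ} {α L R M : ℝ}
    (hxL : ∀ s ∈ I, ∀ t ∈ I, |x t - x s| ≤ L * |t - s| ^ α) (hxR : ∀ u ∈ I, ‖x u‖ ≤ R)
    (hM : ∀ z ∈ Icc (-R) R, ‖iteratedDeriv 2 h z‖ ≤ M) {u ε : ℝ} (hε : 0 < ε) (hu : u ∈ I)
    (huε : u + ε ∈ I) :
    |(h (x (u + ε)) + h (x u)) / 2 * (x (u + ε) - x u) - (H (x (u + ε)) - H (x u))|
      ≤ M / 12 * L ^ 3 * ε ^ (3 * α) := by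
  have hincr : |x (u + ε) - x u| ≤ L * ε ^ α := by
    simpa [abs_of_pos hε] using hxL u hu (u + ε) huε
  have hM' : ∀ z ∈ [[x u, x (u + ε)]], |iteratedDeriv 2 h z| ≤ M := fun z hz =>
    hM z (uIcc_subset_Icc (abs_le.1 (hxR u hu)) (abs_le.1 (hxR _ huε)) hz)
  have hM0 : 0 ≤ M := (abs_nonneg _).trans (hM' _ left_mem_uIcc)
  calc |(h (x (u + ε)) + h (x u)) / 2 * (x (u + ε) - x u) - (H (x (u + ε)) - H (x u))|
      ≤ M / 12 * |x (u + ε) - x u| ^ 3 := by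
        rw [add_comm]; exact abs_trapezoid_sub_le hh hH hM'
    _ ≤ M / 12 * (L * ε ^ α) ^ 3 := by gcongr
    _ = M / 12 * L ^ 3 * ε ^ (3 * α) := by
        rw [mul_pow, mul_comm 3 α, Real.rpow_mul hε.le]; norm_num; ring

theorem ContinuousOn.tendsto_inv_mul_integral_right {F : ℝ → ℝ} {a b c : ℝ}
    (hF : ContinuousOn F (Icc a b)) (hc : c ∈ Ico a b) :
    Tendsto (fun ε => ε⁻¹ * ∫ u in c..c + ε, F u) (𝓝[>] 0) (𝓝 (F c)) := by
  have hmem : Icc a b ∈ 𝓝[>] c := Icc_mem_nhdsGT_of_mem hc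
  have hderiv : HasDerivWithinAt (fun t => ∫ u in c..t, F u) (F c) (Ici c) c :=
    intervalIntegral.integral_hasDerivWithinAt_right (t := Ioi c) .refl
      ⟨Icc a b, hmem, hF.aestronglyMeasurable measurableSet_Icc⟩
      ((hF c (Ico_subset_Icc_self hc)).mono_of_mem_nhdsWithin hmem)
  rw [hasDerivWithinAt_iff_tendsto_slope, Ici_sdiff_left] at hderiv
  have hshift : Tendsto (c + ·) (𝓝[>] (0 : ℝ)) (𝓝[>] c) := by
    have := (map_add_left_nhdsGT (c := c) (a := (0 : ℝ))).le
    rwa [add_zero] at this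
  refine (hderiv.comp hshift).congr fun ε => ?_
  simp [slope_def_field, div_eq_inv_mul]

theorem ContinuousOn.tendsto_inv_mul_integral_sub_shift {F : ℝ → ℝ} {a b r s : ℝ}
    (hF : ContinuousOn F (Icc a b)) (har : a ≤ r) (hrs : r ≤ s) (hsb : s < b) :
    Tendsto (fun ε => ε⁻¹ * ∫ u in r..s, (F (u + ε) - F u)) (𝓝[>] 0) (𝓝 (F s - F r)) := by
  have hFi : ∀ p ∈ Icc a b, ∀ q ∈ Icc a b, IntervalIntegrable F volume p q :=
    fun p hp q hq => (hF.mono (uIcc_subset_Icc hp hq)).intervalIntegrable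
  refine ((hF.tendsto_inv_mul_integral_right ⟨har.trans hrs, hsb⟩).sub
    (hF.tendsto_inv_mul_integral_right ⟨har, hrs.trans_lt hsb⟩)).congr' ?_
  filter_upwards [Ioo_mem_nhdsGT (sub_pos.2 hsb)] with ε ⟨hε0, hεb⟩
  have hr : r ∈ Icc a b := ⟨har, by linarith⟩
  have hs : s ∈ Icc a b := ⟨by linarith, hsb.le⟩
  have hrε : r + ε ∈ Icc a b := ⟨by linarith, by linarith⟩
  have hsε : s + ε ∈ Icc a b := ⟨by linarith, by linarith⟩
  have hshift : IntervalIntegrable (fun u => F (u + ε)) volume r s := by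
    simpa using (hFi _ hrε _ hsε).comp_add_right ε
  rw [← mul_sub, intervalIntegral.integral_sub hshift (hFi r hr s hs),
    intervalIntegral.integral_comp_add_right, intervalIntegral.integral_interval_sub_interval_comm'
      (hFi _ hrε _ hsε) (hFi r hr s hs) (hFi _ hrε r hr)]

theorem tendsto_inv_mul_integral_of_abs_sub_le {f g : ℝ → ℝ → ℝ} {r s l C p : ℝ} (hp : 1 < p)
    (hg : Tendsto (fun ε => ε⁻¹ * ∫ u in r..s, g ε u) (𝓝[>] 0) (𝓝 l))
    (hint : ∀ᶠ ε in 𝓝[>] 0,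
      IntervalIntegrable (f ε) volume r s ∧ IntervalIntegrable (g ε) volume r s)
    (hfg : ∀ᶠ ε in 𝓝[>] 0, ∀ u ∈ Ι r s, |f ε u - g ε u| ≤ C * ε ^ p) :
    Tendsto (fun ε => ε⁻¹ * ∫ u in r..s, f ε u) (𝓝[>] 0) (𝓝 l) := by
  have hbound : Tendsto (fun ε : ℝ => C * |s - r| * ε ^ (p - 1)) (𝓝[>] 0) (𝓝 0) := by
    have hcont : ContinuousWithinAt (fun ε : ℝ => C * |s - r| * ε ^ (p - 1)) (Ioi 0) 0 :=
      (continuous_const.mul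
        (continuous_id.rpow_const fun _ => Or.inr (by linarith))).continuousWithinAt
    simpa [ContinuousWithinAt, Real.zero_rpow (by linarith : p - 1 ≠ 0)] using hcont
  have herr : Tendsto (fun ε => ε⁻¹ * ∫ u in r..s, (f ε u - g ε u)) (𝓝[>] 0) (𝓝 0) := by
    refine squeeze_zero_norm' ?_ hbound
    filter_upwards [hfg, self_mem_nhdsWithin] with ε hε (hε0 : 0 < ε)
    calc ‖ε⁻¹ * ∫ u in r..s, (f ε u - g ε u)‖
        ≤ ε⁻¹ * (C * ε ^ p * |s - r|) := by
          rw [norm_mul, norm_inv, Real.norm_eq_abs, abs_of_pos hε0]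
          exact mul_le_mul_of_nonneg_left
            (intervalIntegral.norm_integral_le_of_norm_le_const hε) (inv_nonneg.2 hε0.le)
      _ = C * |s - r| * ε ^ (p - 1) := by
          rw [Real.rpow_sub_one hε0.ne']; field_simp
  rw [← add_zero l]
  refine (hg.add herr).congr' ?_
  filter_upwards [hint] with ε ⟨hf, hg⟩
  rw [← mul_add, ← intervalIntegral.integral_add hg (hf.sub hg)]
  simp

theorem stmt_10 (α : ℝ) (hα : α ∈ Set.Ioo (1/3 : ℝ) 1)
    (x : ℝ → ℝ) (hx : HolderOnIcc α 0 3 x)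
    (h : ℝ → ℝ) (hh : ContDiff ℝ 2 h)
    (H : ℝ → ℝ) (hH : ∀ z : ℝ, HasDerivAt H (h z) z) :
    ∀ r s : ℝ, 0 ≤ r → r ≤ s → s ≤ 2 →
      RVTendsto (fun u => h (x u)) x r s (H (x s) - H (x r)) := by
  intro r s hr hrs hs2
  have hxc := hx.continuousOn (by linarith [hα.1])
  obtain ⟨L, -, hxL⟩ := hx
  obtain ⟨R, hR⟩ := isCompact_Icc.exists_bound_of_continuousOn hxc
  obtain ⟨M, hM⟩ := isCompact_Icc.exists_bound_of_continuousOn (s := Icc (-R) R)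
    (hh.continuous_iteratedDeriv 2 le_rfl).continuousOn
  have hHc : Continuous H := continuous_iff_continuousAt.2 fun z => (hH z).continuousAt
  have hmem : ∀ᶠ ε in 𝓝[>] (0 : ℝ),
      0 < ε ∧ ∀ u ∈ [[r, s]], u ∈ Icc (0 : ℝ) 3 ∧ u + ε ∈ Icc 0 3 := by
    filter_upwards [Ioo_mem_nhdsGT one_pos] with ε ⟨hε0, hε1⟩
    refine ⟨hε0, fun u hu => ?_⟩
    rw [uIcc_of_le hrs] at hu
    exact ⟨⟨by linarith [hu.1], by linarith [hu.2]⟩, ⟨by linarith [hu.1], by linarith [hu.2]⟩⟩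
  refine tendsto_inv_mul_integral_of_abs_sub_le (C := M / 12 * L ^ 3) (p := 3 * α)
    (by linarith [hα.1])
    ((hHc.comp_continuousOn hxc).tendsto_inv_mul_integral_sub_shift hr hrs (by linarith)) ?_ ?_
  · filter_upwards [hmem] with ε ⟨_, hε⟩
    have hx0 : ContinuousOn x [[r, s]] := hxc.mono fun u hu => (hε u hu).1
    have hxε : ContinuousOn (fun u => x (u + ε)) [[r, s]] :=
      hxc.comp (by fun_prop) fun u hu => (hε u hu).2
    constructor <;> apply ContinuousOn.intervalIntegrable
    · exact (((hh.continuous.comp_continuousOn hxε).add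
        (hh.continuous.comp_continuousOn hx0)).div_const 2).mul (hxε.sub hx0)
    · exact (hHc.comp_continuousOn hxε).sub (hHc.comp_continuousOn hx0)
  · filter_upwards [hmem] with ε ⟨hε0, hε⟩ u hu
    obtain ⟨hu, huε⟩ := hε u (uIoc_subset_uIcc hu)
    exact abs_trapezoid_comp_sub_le hh hH hxL hR hM hε0 hu huε
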